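/- Let n ≥ 1, α > 0, 1 < p < ∞ with conjugate exponent p' = p/(p−1), and let p' ≤ s < ∞. Let Y be a Banach space and T : F^p_α → Y an s-summing operator. Then for every δ > 0 and every δ-lattice {z_j} in ℂⁿ with covering multiplicity at most N at radius δ, one has ∑_{j=1}^∞ ‖T(k_{z_j})‖_Y^s ≤ C·π_s(T)^s, where C depends only on n, p, s, α, δ, N. -/

import Mathlib

open MeasureTheory Metric ENNReal
open scoped ENNReal NNReal ComplexConjugate

noncomputable section

/-- `ℂⁿ` with the Euclidean metric and Lebesgue measure. -/
abbrev Cn (n : ℕ) := EuclideanSpace ℂ (Fin n)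

instance (n : ℕ) : MeasurableSpace (Cn n) := borel _
instance (n : ℕ) : BorelSpace (Cn n) := ⟨rfl⟩

/-- Lebesgue measure on `ℂⁿ ≅ ℝ^{2n}`, normalized by an orthonormal real basis. -/
instance (n : ℕ) : MeasureSpace (Cn n) := ⟨(stdOrthonormalBasis ℝ (Cn n)).toBasis.addHaar⟩

/-- The Hermitian pairing `⟨w,z⟩ = ∑ᵢ wᵢ · conj zᵢ`. -/
def herm {n : ℕ} (w z : Cn n) : ℂ := ∑ i, w i * conj (z i)

/-- The normalized reproducing kernel `k_z(w) = e^{α⟨w,z⟩ − α|z|²/2}` of `F²_α`. -/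
def fockKernel (n : ℕ) (α : ℝ) (z w : Cn n) : ℂ :=
  Complex.exp ((α : ℂ) * herm w z - ((α / 2 * ‖z‖ ^ 2 : ℝ) : ℂ))

/-- The weighted measure `e^{−αp|z|²/2} dv(z)`, so that `L^p_α = L^p` of this measure. -/
def wMeasure (n : ℕ) (p α : ℝ) : Measure (Cn n) :=
  (volume : Measure (Cn n)).withDensity fun z =>
    ENNReal.ofReal (Real.exp (-(α * p / 2) * ‖z‖ ^ 2))

/-- The `L^p_α`-norm `(∫ |f|^p e^{−αp|z|²/2} dv)^{1/p}`, valued in `ℝ≥0∞`. -/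
def eNormLpα (n : ℕ) (p α : ℝ) (f : Cn n → ℂ) : ℝ≥0∞ :=
  (∫⁻ z, ENNReal.ofReal (‖f z‖ ^ p * Real.exp (-(α * p / 2) * ‖z‖ ^ 2))) ^ (1 / p)

/-- The Bergman projection `P f(z) = ∫ e^{α⟨z,w⟩} f(w) e^{−α|w|²} dv(w)`. -/
def bergmanProj (n : ℕ) (α : ℝ) (f : Cn n → ℂ) (z : Cn n) : ℂ :=
  ∫ w, Complex.exp ((α : ℂ) * herm z w) * f w * ((Real.exp (-α * ‖w‖ ^ 2) : ℝ) : ℂ)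

/-- The Hankel operator `H_f g = f g − P(fg)`, as a function. -/
def hankel (n : ℕ) (α : ℝ) (f g : Cn n → ℂ) : Cn n → ℂ :=
  fun z => f z * g z - bergmanProj n α (fun w => f w * g w) z

/-- The symbol class `𝒮`: `f·k_z ∈ ⋃_{q ≥ 1} L^q_α` for every `z`. -/
def symbolClass (n : ℕ) (α : ℝ) (f : Cn n → ℂ) : Prop :=
  ∀ z : Cn n, ∃ q : ℝ, 1 ≤ q ∧
    MemLp (fun w => f w * fockKernel n α z w) (ENNReal.ofReal q) (wMeasure n q α)

/-- `G_{p,ρ}(f)(z)`: the distance of `f` to holomorphic functions in the normalized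
`L^p`-metric of the ball `B(z,ρ)`. -/
def Gfun (n : ℕ) (p ρ : ℝ) (f : Cn n → ℂ) (z : Cn n) : ℝ :=
  ⨅ h : {h : Cn n → ℂ // DifferentiableOn ℂ h (ball z ρ)},
    (((∫⁻ w in ball z ρ, ENNReal.ofReal (‖f w - h.1 w‖ ^ p)) /
        volume (ball z ρ)).toReal) ^ (1 / p)

/-- Membership in `IDA^{s,p}`. -/
def memIDA (n : ℕ) (s p : ℝ) (f : Cn n → ℂ) : Prop :=
  LocallyIntegrable (fun z => ‖f z‖ ^ p) (volume : Measure (Cn n)) ∧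
    (∫⁻ z, ENNReal.ofReal (Gfun n p 1 f z ^ s)) < ∞

/-- The `IDA^{s,p}`-norm `(∫ G_p(f)^s dv)^{1/s}`. -/
def idaNorm (n : ℕ) (s p : ℝ) (f : Cn n → ℂ) : ℝ :=
  ((∫⁻ z, ENNReal.ofReal (Gfun n p 1 f z ^ s)).toReal) ^ (1 / s)

/-- The exponent `κ = κ(p,r)` of the main theorem. -/
def kappaPR (p r : ℝ) : ℝ :=
  if p ≤ 2 then 2
  else if r ≤ p / (p - 1) then p / (p - 1)
  else if r ≤ p then r
  else p

/-- `T : X → Y` is `(q,r)`-summing with constant `C`: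
`(∑ₖ ‖T xₖ‖^q)^{1/q} ≤ C · sup_{‖x*‖ ≤ 1} (∑ₖ |x*(xₖ)|^r)^{1/r}`
for all finite sequences. -/
def IsSummingWith {X Y : Type*} [NormedAddCommGroup X] [NormedSpace ℂ X]
    [NormedAddCommGroup Y] (q r : ℝ) (T : X → Y) (C : ℝ) : Prop :=
  ∀ (m : ℕ) (x : Fin m → X) (D : ℝ),
    (∀ φ : X →L[ℂ] ℂ, ‖φ‖ ≤ 1 → (∑ k, ‖φ (x k)‖ ^ r) ^ (1 / r) ≤ D) →
    (∑ k, ‖T (x k)‖ ^ q) ^ (1 / q) ≤ C * D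

instance factOneLeOfReal (p : ℝ) [hp : Fact ((1 : ℝ) ≤ p)] :
    Fact ((1 : ℝ≥0∞) ≤ ENNReal.ofReal p) :=
  ⟨by simpa using ENNReal.one_le_ofReal.mpr hp.out⟩

instance factOneLeOneReal : Fact ((1 : ℝ) ≤ (1 : ℝ)) := ⟨le_refl _⟩

/-- The Fock space `F^p_α` as a submodule of `L^p_α`: the a.e. classes having an
entire representative. -/
def FockSubmodule (n : ℕ) (p α : ℝ) :
    Submodule ℂ (Lp ℂ (ENNReal.ofReal p) (wMeasure n p α)) where
  carrier := {f | ∃ g : Cn n → ℂ, Differentiable ℂ g ∧ (f : Cn n → ℂ) =ᵐ[wMeasure n p α] g}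
  add_mem' := by
    rintro f₁ f₂ ⟨g₁, hg₁, he₁⟩ ⟨g₂, hg₂, he₂⟩
    exact ⟨g₁ + g₂, hg₁.add hg₂, (Lp.coeFn_add f₁ f₂).trans (he₁.add he₂)⟩
  zero_mem' := ⟨0, differentiable_const 0, Lp.coeFn_zero ℂ _ _⟩
  smul_mem' := by
    rintro c f ⟨g, hg, he⟩
    exact ⟨c • g, hg.const_smul c, (Lp.coeFn_smul c f).trans (he.const_smul c)⟩

/-- The Fock space `F^p_α`, as a normed space. -/
abbrev FockSpace (n : ℕ) (p α : ℝ) := ↥(FockSubmodule n p α)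

/-- A continuous linear operator `T : F^p_α → L^p_α` extends the Hankel operator `H_f`
(which is densely defined on the span of the normalized reproducing kernels). -/
def ExtendsHankel (n : ℕ) (p α : ℝ) [Fact ((1 : ℝ) ≤ p)] (f : Cn n → ℂ)
    (T : FockSpace n p α →L[ℂ] Lp ℂ (ENNReal.ofReal p) (wMeasure n p α)) : Prop :=
  ∀ (z : Cn n) (g : FockSpace n p α),
    ((g : Lp ℂ (ENNReal.ofReal p) (wMeasure n p α)) : Cn n → ℂ)
        =ᵐ[wMeasure n p α] fockKernel n α z →
    ((T g : Lp ℂ (ENNReal.ofReal p) (wMeasure n p α)) : Cn n → ℂ)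
        =ᵐ[wMeasure n p α] hankel n α f (fockKernel n α z)

/-- The measure defining `L^p_α(dμ)`, namely `e^{−αp|z|²/2} dμ(z)`. -/
def wMeasureμ (n : ℕ) (p α : ℝ) (μ : Measure (Cn n)) : Measure (Cn n) :=
  μ.withDensity fun z => ENNReal.ofReal (Real.exp (-(α * p / 2) * ‖z‖ ^ 2))

/-- A continuous linear operator `T : F^p_α → L^p_α(dμ)` is the identity embedding:
it sends each element of the Fock space to (the `L^p(dμ)`-class of) its entire
representative. -/
def IsEmbeddingInto (n : ℕ) (p α : ℝ) [Fact ((1 : ℝ) ≤ p)] (μ : Measure (Cn n))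
    (T : FockSpace n p α →L[ℂ] Lp ℂ (ENNReal.ofReal p) (wMeasureμ n p α μ)) : Prop :=
  ∀ (g : FockSpace n p α) (G : Cn n → ℂ), Differentiable ℂ G →
    ((g : Lp ℂ (ENNReal.ofReal p) (wMeasure n p α)) : Cn n → ℂ) =ᵐ[wMeasure n p α] G →
    ((T g : Lp ℂ (ENNReal.ofReal p) (wMeasureμ n p α μ)) : Cn n → ℂ) =ᵐ[wMeasureμ n p α μ] G

/-- `{z_j}` is a `δ`-lattice: the balls `B(z_j, δ)` cover `ℂⁿ` and the balls
`B(z_j, bδ)` are pairwise disjoint for some `b > 0`. -/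
def IsLattice (n : ℕ) (δ : ℝ) (zs : ℕ → Cn n) : Prop :=
  (∀ w : Cn n, ∃ j, w ∈ ball (zs j) δ) ∧
    ∃ b : ℝ, 0 < b ∧ Pairwise fun i j => Disjoint (ball (zs i) (b * δ)) (ball (zs j) (b * δ))

/-- Every point of `ℂⁿ` lies in at most `N` of the balls `B(z_j, ρ)`. -/
def CoverMult (n : ℕ) (ρ : ℝ) (zs : ℕ → Cn n) (N : ℕ) : Prop :=
  ∀ w : Cn n, Set.Finite {j | w ∈ ball (zs j) ρ} ∧ Set.ncard {j | w ∈ ball (zs j) ρ} ≤ N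

/-- The averaged function `μ̂_δ(z) = μ(B(z,δ))/|B(z,δ)|`, valued in `ℝ≥0∞`. -/
def avgE (n : ℕ) (μ : Measure (Cn n)) (δ : ℝ) (z : Cn n) : ℝ≥0∞ :=
  μ (ball z δ) / volume (ball z δ)

/-- The `t`-Berezin transform `μ̃_t(z) = ∫ |k_z(w)|^t e^{−αt|w|²/2} dμ(w)`, valued in `ℝ≥0∞`. -/
def berezinE (n : ℕ) (α t : ℝ) (μ : Measure (Cn n)) (z : Cn n) : ℝ≥0∞ :=
  ∫⁻ w, ENNReal.ofReal (‖fockKernel n α z w‖ ^ t * Real.exp (-(α * t / 2) * ‖w‖ ^ 2)) ∂μ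

end

/-! Testing a norm-one functional `φ` against finite combinations of the kernels shows that
`(φ k_{z_j})_j` has `ℓ^{p'}`-norm, hence `ℓ^s`-norm, at most the constant `K` of the upper
estimate `‖∑ a_j k_{z_j}‖_{p,α} ≤ K ‖a‖_{ℓ^p}`; the `s`-summing property then gives
`∑ ‖T k_{z_j}‖^s ≤ (π_s(T) K)^s`. The upper estimate comes from the identity
`|k_z(w)| e^{-α|w|²/2} = e^{-α|w-z|²/2}`, Hölder's inequality with these Gaussians as weights,
and the uniform boundedness of the sum of the Gaussians centred at a separated family. -/

lemma rpow_sum_mul_le_mul_sum_mul_rpow {ι : Type*} (s : Finset ι) {p : ℝ} (hp : 1 ≤ p)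
    {w f : ι → ℝ} (hw : ∀ i, 0 ≤ w i) (hf : ∀ i, 0 ≤ f i) :
    (∑ i ∈ s, w i * f i) ^ p ≤ (∑ i ∈ s, w i) ^ (p - 1) * ∑ i ∈ s, w i * f i ^ p := by
  have hp0 : p ≠ 0 := by positivity
  have hW : 0 ≤ ∑ i ∈ s, w i := Finset.sum_nonneg fun i _ => hw i
  have hX : 0 ≤ ∑ i ∈ s, w i * f i ^ p :=
    Finset.sum_nonneg fun i _ => mul_nonneg (hw i) (Real.rpow_nonneg (hf i) p)
  calc (∑ i ∈ s, w i * f i) ^ p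
      ≤ ((∑ i ∈ s, w i) ^ (1 - p⁻¹) * (∑ i ∈ s, w i * f i ^ p) ^ p⁻¹) ^ p :=
        Real.rpow_le_rpow (Finset.sum_nonneg fun i _ => mul_nonneg (hw i) (hf i))
          (Real.inner_le_weight_mul_Lp_of_nonneg s hp w f hw hf) (by positivity)
    _ = (∑ i ∈ s, w i) ^ (p - 1) * ∑ i ∈ s, w i * f i ^ p := by
        rw [Real.mul_rpow (by positivity) (by positivity), ← Real.rpow_mul hW,
          ← Real.rpow_mul hX, inv_mul_cancel₀ hp0, Real.rpow_one, sub_mul, one_mul,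
          inv_mul_cancel₀ hp0]

lemma sum_norm_rpow_le_of_norm_sum_mul_le {𝕜 ι : Type*} [RCLike 𝕜] [Fintype ι] {p q A : ℝ}
    (hpq : p.HolderConjugate q) (hA : 0 ≤ A) (h : ι → 𝕜)
    (H : ∀ a : ι → 𝕜, ‖∑ j, a j * h j‖ ≤ A * (∑ j, ‖a j‖ ^ p) ^ (1 / p)) :
    ∑ j, ‖h j‖ ^ q ≤ A ^ q := by
  set S := ∑ j, ‖h j‖ ^ q
  have hq := hpq.symm.pos
  have hS0 : 0 ≤ S := by positivity
  -- the extremal vector for Hölder's inequality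
  set a : ι → 𝕜 := fun j => conj (h j) * ((‖h j‖ ^ (q - 2) : ℝ) : 𝕜)
  have ha_mul : ∀ j, a j * h j = ((‖h j‖ ^ q : ℝ) : 𝕜) := fun j => by
    have hpow : ‖h j‖ ^ (q - 2) * ‖h j‖ ^ 2 = ‖h j‖ ^ q := by
      rw [← Real.rpow_natCast, ← Real.rpow_add' (norm_nonneg _) (by simpa using hq.ne')]
      norm_num
    rw [mul_right_comm, RCLike.conj_mul, ← hpow]
    push_cast; ring
  have ha_norm : ∀ j, ‖a j‖ ^ p = ‖h j‖ ^ q := fun j => by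
    rw [norm_mul, RCLike.norm_conj, RCLike.norm_ofReal, abs_of_nonneg (by positivity),
      ← Real.rpow_one_add' (norm_nonneg _) (by linarith [hpq.symm.lt]),
      ← Real.rpow_mul (norm_nonneg _)]
    congr 1
    linarith [hpq.symm.sub_one_mul_conj]
  have key : S ≤ A * S ^ (1 / p) := by
    have := H a
    rwa [Finset.sum_congr rfl fun j _ => ha_mul j, ← RCLike.ofReal_sum, RCLike.norm_ofReal,
      abs_of_nonneg hS0, Finset.sum_congr rfl fun j _ => ha_norm j] at this
  rcases hS0.eq_or_lt with hS | hS
  · rw [← hS]; positivity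
  · have hSq : S ^ (1 / q) ≤ A := by
      rw [show 1 / q = 1 - 1 / p by linarith [hpq.one_div_add_one_div], Real.rpow_sub hS,
        Real.rpow_one, div_le_iff₀ (by positivity)]
      exact key
    calc S = (S ^ (1 / q)) ^ q := by
          rw [← Real.rpow_mul hS0, one_div_mul_cancel hq.ne', Real.rpow_one]
      _ ≤ A ^ q := by gcongr

lemma sum_rpow_le_of_sum_rpow_le {ι : Type*} (s : Finset ι) {t : ι → ℝ} (ht : ∀ i, 0 ≤ t i)
    {q r A : ℝ} (hq : 0 < q) (hqr : q ≤ r) (hA : 0 ≤ A) (h : ∑ i ∈ s, t i ^ q ≤ A ^ q) :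
    ∑ i ∈ s, t i ^ r ≤ A ^ r := by
  have hle : ∀ i ∈ s, t i ≤ A := fun i hi =>
    (Real.rpow_le_rpow_iff (ht i) hA hq).mp
      ((Finset.single_le_sum (fun j _ => Real.rpow_nonneg (ht j) q) hi).trans h)
  have hsplit : ∀ x : ℝ, 0 ≤ x → x ^ r = x ^ q * x ^ (r - q) := fun x hx => by
    rw [← Real.rpow_add' hx (by linarith)]; ring_nf
  calc ∑ i ∈ s, t i ^ r = ∑ i ∈ s, t i ^ q * t i ^ (r - q) :=
        Finset.sum_congr rfl fun i _ => hsplit _ (ht i)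
    _ ≤ ∑ i ∈ s, t i ^ q * A ^ (r - q) := Finset.sum_le_sum fun i hi =>
        mul_le_mul_of_nonneg_left (Real.rpow_le_rpow (ht i) (hle i hi) (by linarith))
          (Real.rpow_nonneg (ht i) q)
    _ ≤ A ^ q * A ^ (r - q) := by rw [← Finset.sum_mul]; gcongr
    _ = A ^ r := (hsplit A hA).symm

lemma sum_norm_rpow_le_of_norm_sum_smul_le {X ι : Type*} [NormedAddCommGroup X] [NormedSpace ℂ X]
    [Fintype ι] {p q s K : ℝ} (hpq : p.HolderConjugate q) (hqs : q ≤ s) (hK : 0 ≤ K)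
    (x : ι → X) (hx : ∀ a : ι → ℂ, ‖∑ j, a j • x j‖ ≤ K * (∑ j, ‖a j‖ ^ p) ^ (1 / p))
    (φ : X →L[ℂ] ℂ) (hφ : ‖φ‖ ≤ 1) :
    ∑ j, ‖φ (x j)‖ ^ s ≤ K ^ s := by
  refine sum_rpow_le_of_sum_rpow_le _ (fun _ => norm_nonneg _) hpq.symm.pos hqs hK ?_
  refine sum_norm_rpow_le_of_norm_sum_mul_le hpq hK _ fun a => ?_
  calc ‖∑ j, a j * φ (x j)‖ = ‖φ (∑ j, a j • x j)‖ := by simp only [map_sum, map_smul, smul_eq_mul]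
    _ ≤ ‖φ‖ * ‖∑ j, a j • x j‖ := φ.le_opNorm _
    _ ≤ 1 * (K * (∑ j, ‖a j‖ ^ p) ^ (1 / p)) := by gcongr; exact hx a
    _ = K * (∑ j, ‖a j‖ ^ p) ^ (1 / p) := one_mul _

lemma IsSummingWith.sum_norm_rpow_le {X Y : Type*} [NormedAddCommGroup X] [NormedSpace ℂ X]
    [NormedAddCommGroup Y] {s C₀ D : ℝ} {T : X → Y} (hT : IsSummingWith s s T C₀) (hs : 0 < s)
    (hC₀ : 0 ≤ C₀) (hD : 0 ≤ D) {m : ℕ} (x : Fin m → X)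
    (hx : ∀ φ : X →L[ℂ] ℂ, ‖φ‖ ≤ 1 → ∑ k, ‖φ (x k)‖ ^ s ≤ D ^ s) :
    ∑ k, ‖T (x k)‖ ^ s ≤ C₀ ^ s * D ^ s := by
  have hweak : ∀ φ : X →L[ℂ] ℂ, ‖φ‖ ≤ 1 → (∑ k, ‖φ (x k)‖ ^ s) ^ (1 / s) ≤ D := fun φ hφ => by
    rw [one_div, Real.rpow_inv_le_iff_of_pos (by positivity) hD hs]
    exact hx φ hφ
  have := hT m x D hweak
  rw [one_div, Real.rpow_inv_le_iff_of_pos (by positivity) (by positivity) hs,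
    Real.mul_rpow hC₀ hD] at this
  exact this

lemma exp_neg_mul_norm_sub_sq_le {F : Type*} [SeminormedAddCommGroup F] {c r : ℝ} (hc : 0 ≤ c)
    {u w z : F} (hu : u ∈ ball z r) :
    Real.exp (-c * ‖w - z‖ ^ 2) ≤ Real.exp (c * r ^ 2) * Real.exp (-(c / 2) * ‖u - w‖ ^ 2) := by
  rw [← Real.exp_add, Real.exp_le_exp]
  have huz : ‖u - z‖ ≤ r := (mem_ball_iff_norm.mp hu).le
  have huw : ‖u - w‖ ≤ ‖u - z‖ + ‖w - z‖ := norm_sub_le_norm_sub_add_norm_sub u z w |>.trans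
    (by rw [norm_sub_rev z w])
  have : ‖u - w‖ ^ 2 ≤ 2 * r ^ 2 + 2 * ‖w - z‖ ^ 2 := by
    nlinarith [norm_nonneg (u - w), norm_nonneg (u - z), norm_nonneg (w - z),
      sq_nonneg (‖u - z‖ - ‖w - z‖)]
  nlinarith

section Gaussian

variable {E : Type*} [NormedAddCommGroup E] [InnerProductSpace ℝ E] [FiniteDimensional ℝ E]
  [MeasurableSpace E] [BorelSpace E]

lemma lintegral_exp_neg_mul_norm_sq_lt_top (μ : Measure E) [μ.IsAddHaarMeasure] {c : ℝ}
    (hc : 0 < c) : ∫⁻ u, ENNReal.ofReal (Real.exp (-c * ‖u‖ ^ 2)) ∂μ < ∞ := by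
  have hvol : Integrable (fun v : E => Real.exp (-c * ‖v‖ ^ 2)) := by
    have := (GaussianFourier.integrable_cexp_neg_mul_sq_norm_add (V := E) (b := c)
      (by simpa using hc) 0 0).norm
    simpa [Complex.norm_exp, ← Complex.ofReal_pow] using this
  rw [μ.isAddLeftInvariant_eq_smul volume]
  exact (hvol.smul_measure ENNReal.coe_ne_top).lintegral_lt_top

/-- Each Gaussian is dominated by `e^{c r²}` times the average of a wider Gaussian over the
`r`-ball around its centre, and these balls are disjoint. -/
lemma exists_sum_exp_neg_mul_norm_sub_sq_le {ι : Type*} {c r : ℝ} (hc : 0 < c) (hr : 0 < r)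
    {z : ι → E} (hdisj : Pairwise fun i j => Disjoint (ball (z i) r) (ball (z j) r)) :
    ∃ M : ℝ, ∀ (w : E) (F : Finset ι), ∑ j ∈ F, Real.exp (-c * ‖w - z j‖ ^ 2) ≤ M := by
  set G : E → ℝ≥0∞ := fun u => ENNReal.ofReal (Real.exp (-(c / 2) * ‖u‖ ^ 2))
  set V := volume (ball (0 : E) r)
  have hV0 : V ≠ 0 := (measure_ball_pos _ _ hr).ne'
  set K := ENNReal.ofReal (Real.exp (c * r ^ 2))
  have hKJ : K * ∫⁻ u, G u ≠ ∞ :=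
    ENNReal.mul_ne_top ENNReal.ofReal_ne_top
      (lintegral_exp_neg_mul_norm_sq_lt_top volume (half_pos hc)).ne
  refine ⟨(K * (∫⁻ u, G u) / V).toReal, fun w F => ?_⟩
  have hball : ∀ j, ENNReal.ofReal (Real.exp (-c * ‖w - z j‖ ^ 2)) * V
      ≤ K * ∫⁻ u in ball (z j) r, G (u - w) := by
    intro j
    rw [show V = volume (ball (z j) r) from (Measure.addHaar_ball_center volume (z j) r).symm,
      ← setLIntegral_const, ← lintegral_const_mul' _ _ ENNReal.ofReal_ne_top]
    refine setLIntegral_mono (by fun_prop) fun u hu => ?_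
    rw [← ENNReal.ofReal_mul (Real.exp_pos _).le]
    exact ENNReal.ofReal_le_ofReal (exp_neg_mul_norm_sub_sq_le hc.le hu)
  have hsum : (∑ j ∈ F, ENNReal.ofReal (Real.exp (-c * ‖w - z j‖ ^ 2))) * V
      ≤ K * ∫⁻ u, G u :=
    calc (∑ j ∈ F, ENNReal.ofReal (Real.exp (-c * ‖w - z j‖ ^ 2))) * V
        ≤ ∑ j ∈ F, K * ∫⁻ u in ball (z j) r, G (u - w) := by
          rw [Finset.sum_mul]; exact Finset.sum_le_sum fun j _ => hball j
      _ = K * ∫⁻ u in ⋃ j ∈ F, ball (z j) r, G (u - w) := by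
          rw [← Finset.mul_sum, lintegral_biUnion_finset (fun i _ j _ hij => hdisj hij)
            (fun _ _ => measurableSet_ball)]
      _ ≤ K * ∫⁻ u, G (u - w) := by gcongr; exact Measure.restrict_le_self
      _ = K * ∫⁻ u, G u := by rw [lintegral_sub_right_eq_self G w]
  have hle : ENNReal.ofReal (∑ j ∈ F, Real.exp (-c * ‖w - z j‖ ^ 2)) ≤ K * (∫⁻ u, G u) / V := by
    rw [ENNReal.le_div_iff_mul_le (Or.inl hV0) (Or.inl measure_ball_lt_top.ne),
      ENNReal.ofReal_sum_of_nonneg fun j _ => (Real.exp_pos _).le]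
    exact hsum
  exact (ENNReal.ofReal_le_iff_le_toReal (ENNReal.div_ne_top hKJ hV0)).mp hle

end Gaussian

lemma coeFn_sum_smul_ae_eq_sum_mul {X ι : Type*} [MeasurableSpace X] {μ : Measure X} {q : ℝ≥0∞}
    [Fintype ι] (f : ι → Lp ℂ q μ) {F : ι → X → ℂ} (hf : ∀ j, f j =ᵐ[μ] F j) (a : ι → ℂ) :
    ⇑(∑ j, a j • f j) =ᵐ[μ] fun x => ∑ j, a j * F j x := by
  have hsmul : ∀ᵐ x ∂μ, ∀ j, (a j • f j) x = a j * F j x := by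
    refine ae_all_iff.mpr fun j => ?_
    filter_upwards [Lp.coeFn_smul (a j) (f j), hf j] with x hsx hfx
    rw [hsx, Pi.smul_apply, hfx, smul_eq_mul]
  filter_upwards [Lp.coeFn_fun_finsetSum Finset.univ fun j => a j • f j, hsmul] with x hsum hx
  simp only [hsum, hx]

lemma herm_eq_inner {n : ℕ} (w z : Cn n) : herm w z = inner ℂ z w := by
  simp [herm, PiLp.inner_apply, RCLike.inner_apply]

lemma norm_fockKernel_mul_exp {n : ℕ} (α : ℝ) (z w : Cn n) :
    ‖fockKernel n α z w‖ * Real.exp (-(α / 2) * ‖w‖ ^ 2) = Real.exp (-(α / 2) * ‖w - z‖ ^ 2) := by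
  rw [fockKernel, Complex.norm_exp, herm_eq_inner, ← Real.exp_add, @norm_sub_sq ℂ, inner_re_symm]
  congr 1
  simp only [Complex.sub_re, Complex.re_ofReal_mul, Complex.ofReal_re]
  rw [show RCLike.re (inner ℂ z w) = (inner ℂ z w).re from rfl]
  ring

lemma continuous_fockKernel {n : ℕ} (α : ℝ) (z : Cn n) : Continuous (fockKernel n α z) := by
  unfold fockKernel herm
  fun_prop

section FockKernel

variable {n : ℕ} {ι : Type*} [Fintype ι] {α p M : ℝ} {z : ι → Cn n}

lemma norm_sum_fockKernel_mul_exp_rpow_le (hp : 1 ≤ p) (a : ι → ℂ) (w : Cn n)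
    (hM : ∑ j, Real.exp (-(α / 2) * ‖w - z j‖ ^ 2) ≤ M) :
    (‖∑ j, a j * fockKernel n α (z j) w‖ * Real.exp (-(α / 2) * ‖w‖ ^ 2)) ^ p
      ≤ M ^ (p - 1) * ∑ j, Real.exp (-(α / 2) * ‖w - z j‖ ^ 2) * ‖a j‖ ^ p := by
  have htri : ‖∑ j, a j * fockKernel n α (z j) w‖ * Real.exp (-(α / 2) * ‖w‖ ^ 2)
      ≤ ∑ j, Real.exp (-(α / 2) * ‖w - z j‖ ^ 2) * ‖a j‖ := by
    calc _ ≤ (∑ j, ‖a j‖ * ‖fockKernel n α (z j) w‖) * Real.exp (-(α / 2) * ‖w‖ ^ 2) := by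
          gcongr
          exact (norm_sum_le _ _).trans_eq (by simp only [norm_mul])
      _ = _ := by
          rw [Finset.sum_mul]
          exact Finset.sum_congr rfl fun j _ => by rw [← norm_fockKernel_mul_exp]; ring
  calc _ ≤ (∑ j, Real.exp (-(α / 2) * ‖w - z j‖ ^ 2) * ‖a j‖) ^ p :=
        Real.rpow_le_rpow (by positivity) htri (by linarith)
    _ ≤ (∑ j, Real.exp (-(α / 2) * ‖w - z j‖ ^ 2)) ^ (p - 1)
          * ∑ j, Real.exp (-(α / 2) * ‖w - z j‖ ^ 2) * ‖a j‖ ^ p :=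
        rpow_sum_mul_le_mul_sum_mul_rpow _ hp (fun _ => (Real.exp_pos _).le)
          (fun _ => norm_nonneg _)
    _ ≤ M ^ (p - 1) * ∑ j, Real.exp (-(α / 2) * ‖w - z j‖ ^ 2) * ‖a j‖ ^ p := by
        gcongr

lemma lintegral_enorm_sum_fockKernel_rpow_le (hp : 1 ≤ p)
    (hM : ∀ w, ∑ j, Real.exp (-(α / 2) * ‖w - z j‖ ^ 2) ≤ M) (a : ι → ℂ) :
    ∫⁻ w, ‖∑ j, a j * fockKernel n α (z j) w‖ₑ ^ p ∂wMeasure n p α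
      ≤ ENNReal.ofReal (M ^ (p - 1) * ∑ j, ‖a j‖ ^ p)
        * ∫⁻ u : Cn n, ENNReal.ofReal (Real.exp (-(α / 2) * ‖u‖ ^ 2)) := by
  set G : Cn n → ℝ≥0∞ := fun u => ENNReal.ofReal (Real.exp (-(α / 2) * ‖u‖ ^ 2))
  have hp0 : 0 ≤ p := by linarith
  have hM0 : 0 ≤ M := le_trans (by positivity) (hM 0)
  have hcont : Continuous fun w => ∑ j, a j * fockKernel n α (z j) w := by
    have := fun j => continuous_fockKernel α (z j)
    fun_prop
  rw [wMeasure, lintegral_withDensity_eq_lintegral_mul _ (by fun_prop)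
    (hcont.measurable.enorm.pow_const p)]
  calc _ ≤ ∫⁻ w, ∑ j, ENNReal.ofReal (M ^ (p - 1) * ‖a j‖ ^ p) * G (w - z j) := by
        refine lintegral_mono fun w => ?_
        simp only [Pi.mul_apply, G]
        rw [← ofReal_norm, ENNReal.ofReal_rpow_of_nonneg (norm_nonneg _) hp0,
          ← ENNReal.ofReal_mul (Real.exp_pos _).le]
        simp_rw [← ENNReal.ofReal_mul (by positivity : (0 : ℝ) ≤ M ^ (p - 1) * ‖a _‖ ^ p)]
        rw [← ENNReal.ofReal_sum_of_nonneg fun j _ => by positivity]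
        refine ENNReal.ofReal_le_ofReal ?_
        have key := norm_sum_fockKernel_mul_exp_rpow_le hp a w (hM w)
        rw [Real.mul_rpow (norm_nonneg _) (Real.exp_pos _).le, ← Real.exp_mul] at key
        refine (le_of_eq ?_).trans (key.trans_eq ?_)
        · ring_nf
        · rw [Finset.mul_sum]
          exact Finset.sum_congr rfl fun j _ => by ring
    _ = ∑ j, ENNReal.ofReal (M ^ (p - 1) * ‖a j‖ ^ p) * ∫⁻ u, G u := by
        rw [lintegral_finsetSum _ fun j _ => by fun_prop]
        refine Finset.sum_congr rfl fun j _ => ?_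
        rw [lintegral_const_mul _ (by fun_prop), lintegral_sub_right_eq_self G (z j)]
    _ = _ := by
        rw [← Finset.sum_mul, ← ENNReal.ofReal_sum_of_nonneg fun j _ => by positivity,
          Finset.mul_sum]

lemma norm_sum_smul_le_of_ae_eq_fockKernel (hα : 0 < α) [Fact ((1 : ℝ) ≤ p)]
    (hM : ∀ w, ∑ j, Real.exp (-(α / 2) * ‖w - z j‖ ^ 2) ≤ M) (g : ι → FockSpace n p α)
    (hg : ∀ j, ((g j : Lp ℂ (ENNReal.ofReal p) (wMeasure n p α)) : Cn n → ℂ)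
      =ᵐ[wMeasure n p α] fockKernel n α (z j)) (a : ι → ℂ) :
    ‖∑ j, a j • g j‖ ≤ (M ^ (p - 1)
        * (∫⁻ u : Cn n, ENNReal.ofReal (Real.exp (-(α / 2) * ‖u‖ ^ 2))).toReal) ^ (1 / p)
      * (∑ j, ‖a j‖ ^ p) ^ (1 / p) := by
  set J := ∫⁻ u : Cn n, ENNReal.ofReal (Real.exp (-(α / 2) * ‖u‖ ^ 2))
  have hp : (1 : ℝ) ≤ p := Fact.out
  have hp0 : 0 < p := by linarith
  have hM0 : 0 ≤ M := le_trans (by positivity) (hM 0)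
  have hJ : J = ENNReal.ofReal J.toReal :=
    (ENNReal.ofReal_toReal (lintegral_exp_neg_mul_norm_sq_lt_top volume (half_pos hα)).ne).symm
  have hcoe : ((∑ j, a j • g j : FockSpace n p α) : Cn n → ℂ)
      =ᵐ[wMeasure n p α] fun w => ∑ j, a j * fockKernel n α (z j) w := by
    simpa only [Submodule.coe_sum, Submodule.coe_smul] using
      coeFn_sum_smul_ae_eq_sum_mul (fun j => (g j : Lp ℂ (ENNReal.ofReal p) (wMeasure n p α))) hg a
  change ‖((∑ j, a j • g j : FockSpace n p α) : Lp ℂ (ENNReal.ofReal p) (wMeasure n p α))‖ ≤ _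
  rw [Lp.norm_def]
  refine ENNReal.toReal_le_of_le_ofReal (by positivity) ?_
  rw [eLpNorm_congr_ae hcoe, eLpNorm_eq_lintegral_rpow_enorm_toReal (by simp; linarith)
    ENNReal.ofReal_ne_top, ENNReal.toReal_ofReal hp0.le]
  calc _ ≤ (ENNReal.ofReal (M ^ (p - 1) * ∑ j, ‖a j‖ ^ p) * J) ^ (1 / p) := by
        gcongr
        exact lintegral_enorm_sum_fockKernel_rpow_le hp hM a
    _ = _ := by
        rw [hJ, ← ENNReal.ofReal_mul (by positivity), ENNReal.ofReal_rpow_of_nonneg (by positivity)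
          (by positivity), ← Real.mul_rpow (by positivity) (by positivity),
          ENNReal.toReal_ofReal ENNReal.toReal_nonneg]
        congr 2
        ring

end FockKernel

lemma exists_norm_sum_smul_le_of_ae_eq_fockKernel {n : ℕ} {α p r : ℝ} [Fact ((1 : ℝ) ≤ p)]
    (hα : 0 < α) (hr : 0 < r) {zs : ℕ → Cn n}
    (hdisj : Pairwise fun i j => Disjoint (ball (zs i) r) (ball (zs j) r)) :
    ∃ K : ℝ, 0 < K ∧ ∀ (m : ℕ) (g : Fin m → FockSpace n p α),
      (∀ j, ((g j : Lp ℂ (ENNReal.ofReal p) (wMeasure n p α)) : Cn n → ℂ)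
        =ᵐ[wMeasure n p α] fockKernel n α (zs j)) →
      ∀ a : Fin m → ℂ, ‖∑ j, a j • g j‖ ≤ K * (∑ j, ‖a j‖ ^ p) ^ (1 / p) := by
  obtain ⟨M, hM⟩ := exists_sum_exp_neg_mul_norm_sub_sq_le (half_pos hα) hr hdisj
  refine ⟨max ((M ^ (p - 1) * (∫⁻ u : Cn n,
    ENNReal.ofReal (Real.exp (-(α / 2) * ‖u‖ ^ 2))).toReal) ^ (1 / p)) 1, by positivity,
    fun m g hg a => ?_⟩
  have hMm : ∀ w, ∑ j : Fin m, Real.exp (-(α / 2) * ‖w - zs j‖ ^ 2) ≤ M := fun w => by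
    rw [Fin.sum_univ_eq_sum_range (fun j => Real.exp (-(α / 2) * ‖w - zs j‖ ^ 2))]
    exact hM w _
  refine (norm_sum_smul_le_of_ae_eq_fockKernel hα hMm g hg a).trans ?_
  gcongr
  exact le_max_left _ _

theorem summing_kernel_sum_bound_general (n : ℕ) (α p s : ℝ) (hα : 0 < α)
    [hp : Fact ((1 : ℝ) ≤ p)] (hp1 : 1 < p) (hs : p / (p - 1) ≤ s) (δ : ℝ) (hδ : 0 < δ)
    (zs : ℕ → Cn n) (hlat : IsLattice n δ zs) :
    ∃ C : ℝ, 0 < C ∧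
      ∀ (Y : Type u) [NormedAddCommGroup Y] [NormedSpace ℂ Y] [CompleteSpace Y]
        (T : FockSpace n p α →L[ℂ] Y) (C₀ : ℝ), 0 ≤ C₀ → IsSummingWith s s T C₀ →
        ∀ g : ℕ → FockSpace n p α,
          (∀ j, ((g j : Lp ℂ (ENNReal.ofReal p) (wMeasure n p α)) : Cn n → ℂ)
              =ᵐ[wMeasure n p α] fockKernel n α (zs j)) →
          ∑' j, ENNReal.ofReal (‖T (g j)‖ ^ s) ≤ ENNReal.ofReal (C * C₀ ^ s) := by
  obtain ⟨-, b, hb, hdisj⟩ := hlat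
  obtain ⟨K, hK, hkernel⟩ :=
    exists_norm_sum_smul_le_of_ae_eq_fockKernel (p := p) hα (mul_pos hb hδ) hdisj
  have hpq := Real.HolderConjugate.conjExponent hp1
  have hs0 : 0 < s := hpq.symm.pos.trans_le hs
  refine ⟨K ^ s, by positivity, fun Y _ _ _ T C₀ hC₀ hT g hg => ?_⟩
  refine ENNReal.tsum_le_of_sum_range_le fun m => ?_
  rw [← ENNReal.ofReal_sum_of_nonneg fun j _ => by positivity,
    ← Fin.sum_univ_eq_sum_range (fun j => ‖T (g j)‖ ^ s), mul_comm]
  refine ENNReal.ofReal_le_ofReal (hT.sum_norm_rpow_le hs0 hC₀ hK.le _ fun φ hφ => ?_)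
  exact sum_norm_rpow_le_of_norm_sum_smul_le hpq hs hK.le _ (hkernel m _ fun j => hg j) φ hφ

/-- **Case 1/2 estimate in Theorem 3.3.** Let `1 < p < ∞`, `p' = p/(p−1) ≤ s < ∞`, and let
`{z_j}` be a `δ`-lattice with covering multiplicity at most `N` at radius `δ`. Then there
is `C > 0` (depending only on `n, p, s, α, δ, N`) such that every `s`-summing operator
`T : F^p_α → Y` into a Banach space `Y` satisfies `∑_j ‖T(k_{z_j})‖^s ≤ C π_s(T)^s`. -/
theorem summing_kernel_sum_bound (n : ℕ) (hn : 1 ≤ n) (α p s : ℝ) (hα : 0 < α)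
    [hp : Fact ((1 : ℝ) ≤ p)] (hp1 : 1 < p) (hs : p / (p - 1) ≤ s) (δ : ℝ) (hδ : 0 < δ)
    (N : ℕ) (zs : ℕ → Cn n) (hlat : IsLattice n δ zs) (hN : CoverMult n δ zs N) :
    ∃ C : ℝ, 0 < C ∧
      ∀ (Y : Type u) [NormedAddCommGroup Y] [NormedSpace ℂ Y] [CompleteSpace Y]
        (T : FockSpace n p α →L[ℂ] Y) (C₀ : ℝ), 0 ≤ C₀ → IsSummingWith s s T C₀ →
        ∀ g : ℕ → FockSpace n p α,
          (∀ j, ((g j : Lp ℂ (ENNReal.ofReal p) (wMeasure n p α)) : Cn n → ℂ)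
              =ᵐ[wMeasure n p α] fockKernel n α (zs j)) →
          ∑' j, ENNReal.ofReal (‖T (g j)‖ ^ s) ≤ ENNReal.ofReal (C * C₀ ^ s) :=
  summing_kernel_sum_bound_general n α p s hα (hp := hp) hp1 hs δ hδ zs hlat
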